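/- In the link graph Λ₁ of X₁: (i) every cycle containing one of the four new edges {a_0⁺,b_2⁻}, {b_2⁺,a_1⁺}, {a_1⁻,b_0⁺}, {b_0⁻,a_0⁻} has length at least 5 (the attached square creates no new circuits of length less than five); and (ii) each of the eight bridge edges {a_0⁺,a_1⁺}, {a_2⁺,a_1⁻}, {a_3⁺,a_2⁻}, {a_0⁻,a_3⁻}, {b_0⁺,b_1⁺}, {b_2⁺,b_1⁻}, {b_3⁺,b_2⁻}, {b_0⁻,b_3⁻} lies in no cycle of length 4. Hence the poison corners of each original LOT complex are still present in X₁, so every 2-cell of X₁ other than the attached square contains a poison corner. -/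

import Mathlib

/-- Vertices of the link graph `Λ₁` of `X₁`: `(false, i, ε)` stands for `a_i⁺`/`a_i⁻`
(according to `ε = true`/`false`) and `(true, i, ε)` stands for `b_i⁺`/`b_i⁻`. -/
abbrev Link1V : Type := Bool × Fin 5 × Bool

/-- `a_i⁺`. -/
def aP (i : Fin 5) : Link1V := (false, i, true)
/-- `a_i⁻`. -/
def aM (i : Fin 5) : Link1V := (false, i, false)
/-- `b_i⁺`. -/
def bP (i : Fin 5) : Link1V := (true, i, true)
/-- `b_i⁻`. -/
def bM (i : Fin 5) : Link1V := (true, i, false)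

/-- The thirty-six edges of the link graph `Λ₁` of the vertex of `X₁`: the sixteen
edges of the `a`-copy of the LOT link, the sixteen edges of the `b`-copy, and the four
new edges contributed by the square with boundary word `a₀ b₂ a₁⁻¹ b₀⁻¹`. -/
def link1Edges : List (Sym2 Link1V) :=
  [ s(aP 1, aM 0), s(aP 1, aP 2), s(aP 2, aP 3), s(aP 3, aM 0),
    s(aP 0, aP 1), s(aP 2, aM 1), s(aP 3, aM 2), s(aM 0, aM 3),
    s(aP 4, aP 0), s(aP 4, aM 1), s(aP 4, aM 2), s(aP 4, aM 3),
    s(aM 4, aP 0), s(aM 4, aM 1), s(aM 4, aM 2), s(aM 4, aM 3),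
    s(bP 1, bM 0), s(bP 1, bP 2), s(bP 2, bP 3), s(bP 3, bM 0),
    s(bP 0, bP 1), s(bP 2, bM 1), s(bP 3, bM 2), s(bM 0, bM 3),
    s(bP 4, bP 0), s(bP 4, bM 1), s(bP 4, bM 2), s(bP 4, bM 3),
    s(bM 4, bP 0), s(bM 4, bM 1), s(bM 4, bM 2), s(bM 4, bM 3),
    s(aP 0, bM 2), s(bP 2, aP 1), s(aM 1, bP 0), s(bM 0, aM 0) ]

/-- The link graph `Λ₁`. -/
def link1Graph : SimpleGraph Link1V :=
  SimpleGraph.fromEdgeSet {e | e ∈ link1Edges}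


/-- The four new edges of `Λ₁` contributed by the attached square `a₀ b₂ a₁⁻¹ b₀⁻¹`. -/
def newEdges : List (Sym2 Link1V) :=
  [ s(aP 0, bM 2), s(bP 2, aP 1), s(aM 1, bP 0), s(bM 0, aM 0) ]

/-- The eight bridge edges of `Λ₁` (four in each LOT copy). -/
def bridgeEdges1 : List (Sym2 Link1V) :=
  [ s(aP 0, aP 1), s(aP 2, aM 1), s(aP 3, aM 2), s(aM 0, aM 3),
    s(bP 0, bP 1), s(bP 2, bM 1), s(bP 3, bM 2), s(bM 0, bM 3) ]

/-!
Cutting a cycle open at an edge `s(x, y)` leaves a path from `y` to `x` that is one edge shorter.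
So a cycle of length three or four through `s(x, y)` gives a path `y - z - x` or a path
`y - u - z - x` with `u ≠ x`, `z ≠ y`; for the listed edges of the twenty-vertex link `Λ₁`
no such path exists, which is a finite check.
-/

namespace SimpleGraph.Walk

variable {V : Type*} {G : SimpleGraph V}

lemma IsPath.exists_isPath_of_mem_edges_of_start {x y a : V} {p : G.Walk x a} (hp : p.IsPath)
    (he : s(x, y) ∈ p.edges) :
    ∃ q : G.Walk y a, q.IsPath ∧ x ∉ q.support ∧ q.length + 1 = p.length := by
  cases p with
  | nil => simp at he
  | cons h q =>
    rw [cons_isPath_iff] at hp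
    rw [edges_cons, List.mem_cons] at he
    rcases he with he | he
    · obtain rfl := Sym2.congr_right.mp he
      exact ⟨q, hp.1, hp.2, rfl⟩
    · exact absurd (q.fst_mem_support_of_mem_edges he) hp.2

lemma IsCycle.exists_isPath_of_mem_edges {v x y : V} {c : G.Walk v v} (hc : c.IsCycle)
    (he : s(x, y) ∈ c.edges) : ∃ p : G.Walk y x, p.IsPath ∧ p.length + 1 = c.length := by
  classical
  have hx : x ∈ c.support := c.fst_mem_support_of_mem_edges he
  suffices ∀ c : G.Walk x x, c.IsCycle → s(x, y) ∈ c.edges →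
      ∃ p : G.Walk y x, p.IsPath ∧ p.length + 1 = c.length by
    simpa using this (c.rotate x hx) (hc.rotate hx) ((c.rotate_edges x hx).mem_iff.mpr he)
  rintro (_ | ⟨h, p⟩) hc he
  · simp at he
  rw [cons_isCycle_iff] at hc
  rw [edges_cons, List.mem_cons] at he
  rcases he with he | he
  · obtain rfl := Sym2.congr_right.mp he
    exact ⟨p, hc.1, rfl⟩
  · -- `p` ends at `x`, so `s(x, y)` is its last edge
    rw [← List.mem_reverse, ← edges_reverse] at he
    obtain ⟨q, hq, hxq, hlen⟩ := hc.1.reverse.exists_isPath_of_mem_edges_of_start he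
    exact ⟨q.concat h.symm, hq.concat hxq _, by simp_all⟩

lemma exists_adj_adj_of_length_eq_two {x y : V} (p : G.Walk y x) (hl : p.length = 2) :
    ∃ z, G.Adj y z ∧ G.Adj z x := by
  rcases p with _ | ⟨h₁, _ | ⟨h₂, _ | ⟨h₃, p⟩⟩⟩ <;> simp at hl
  exact ⟨_, h₁, h₂⟩

lemma IsPath.exists_adj_adj_adj_of_length_eq_three {x y : V} {p : G.Walk y x} (hp : p.IsPath)
    (hl : p.length = 3) : ∃ u z, G.Adj y u ∧ G.Adj u z ∧ G.Adj z x ∧ u ≠ x ∧ z ≠ y := by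
  rcases p with _ | ⟨h₁, _ | ⟨h₂, _ | ⟨h₃, _ | ⟨h₄, p⟩⟩⟩⟩ <;> simp at hl
  simp only [cons_isPath_iff, support_cons, support_nil, List.mem_cons, List.not_mem_nil,
    or_false, not_or] at hp
  obtain ⟨⟨-, -, hux⟩, -, hyz, -⟩ := hp
  exact ⟨_, _, h₁, h₂, h₃, hux, Ne.symm hyz⟩

lemma IsCycle.exists_adj_adj_of_length_eq_three {v x y : V} {c : G.Walk v v} (hc : c.IsCycle)
    (he : s(x, y) ∈ c.edges) (hl : c.length = 3) : ∃ z, G.Adj y z ∧ G.Adj z x := by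
  obtain ⟨p, -, hlen⟩ := hc.exists_isPath_of_mem_edges he
  exact exists_adj_adj_of_length_eq_two p (by omega)

lemma IsCycle.exists_adj_adj_adj_of_length_eq_four {v x y : V} {c : G.Walk v v}
    (hc : c.IsCycle) (he : s(x, y) ∈ c.edges) (hl : c.length = 4) :
    ∃ u z, G.Adj y u ∧ G.Adj u z ∧ G.Adj z x ∧ u ≠ x ∧ z ≠ y := by
  obtain ⟨p, hp, hlen⟩ := hc.exists_isPath_of_mem_edges he
  exact hp.exists_adj_adj_adj_of_length_eq_three (by omega)

end SimpleGraph.Walk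

instance : DecidableRel link1Graph.Adj := fun u v =>
  decidable_of_iff (s(u, v) ∈ link1Edges ∧ u ≠ v) (by simp [link1Graph])

/-- In the link graph `Λ₁` of `X₁`: (i) every cycle containing one of
the four new edges has length at least 5 (the attached square creates no new circuits
of length less than five); and (ii) each of the eight bridge edges lies in no cycle of
length 4.  Hence the poison corners of each original LOT complex are still present
in `X₁`. -/
theorem new_edges_and_bridges_in_link1 :
    (∀ e ∈ newEdges, ∀ (v : Link1V) (w : link1Graph.Walk v v),
        w.IsCycle → e ∈ w.edges → 5 ≤ w.length) ∧
    (∀ e ∈ bridgeEdges1, ∀ (v : Link1V) (w : link1Graph.Walk v v),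
        w.IsCycle → e ∈ w.edges → w.length ≠ 4) := by
  refine ⟨fun e he v w hc hew => ?_, fun e he v w hc hew hl => ?_⟩
  · simp only [newEdges, List.mem_cons, List.not_mem_nil, or_false] at he
    by_contra! hlt
    obtain hl | hl : w.length = 3 ∨ w.length = 4 := by have := hc.three_le_length; omega
    · rcases he with rfl | rfl | rfl | rfl <;>
        exact absurd (hc.exists_adj_adj_of_length_eq_three hew hl) (by decide +kernel)
    · rcases he with rfl | rfl | rfl | rfl <;>
        exact absurd (hc.exists_adj_adj_adj_of_length_eq_four hew hl) (by decide +kernel)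
  · simp only [bridgeEdges1, List.mem_cons, List.not_mem_nil, or_false] at he
    rcases he with rfl | rfl | rfl | rfl | rfl | rfl | rfl | rfl <;>
      exact absurd (hc.exists_adj_adj_adj_of_length_eq_four hew hl) (by decide +kernel)
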